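/- arXiv:2512.24491 — 5 statements merged into one kernel-verified Lean document; each statement's English description precedes it below -/
import Mathlib

section
/- Let n ≥ 1 and let Q be an n×n real matrix with nonnegative entries and zero diagonal. Let x ∈ ℝⁿ. Then the jump system JS(x), namely z_i = ( x_i − Σ_{j≠i} q_{ij} z_j )_{-} for all 1 ≤ i ≤ n, admits a solution z ∈ ℝⁿ with z ≥ 0 componentwise if and only if x belongs to the dual cone C* = { y ∈ ℝⁿ : uᵀy ≥ 0 for all u ∈ C }, where C = { u ∈ ℝⁿ : u ≥ 0 componentwise and uᵀ(I−Q) ≤ 0 componentwise }. -/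
/-!
For `T z := (Q z - x)⁺` (componentwise), the solutions of JS(x) are exactly the fixed points of
`T`, since the diagonal of `Q` vanishes, and a vector `z ≥ 0` lies in the feasible set `F(x)`
exactly when `T z ≤ z`. Hence every solution is feasible. Conversely, `T` is monotone because
`Q ≥ 0`, and for `w ∈ F(x)` it maps the order interval `[0, w]` into itself, so Knaster–Tarski
gives a solution.
Thus JS(x) is solvable iff `F(x)` is nonempty, which by Farkas' lemma happens iff `x ∈ C*`:
the elements of `C` are exactly the Farkas certificates for the system `z ≥ 0`, `(I - Q) z ≥ -x`.
Farkas' lemma follows from separation once the cone spanned by finitely many vectors is known to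
be closed; by a conic Carathéodory reduction it is a finite union of cones on linearly independent
generators, each the image of an orthant under a closed embedding.
-/

open Matrix Finset Filter

/-- Negative part: `(a)₋ = max(0, −a)`. -/
noncomputable def nPart (a : ℝ) : ℝ := max 0 (-a)

/-- The jump system JS(x): `z i = (x i − ∑_{j ≠ i} Q i j * z j)₋` for all `i`. -/
noncomputable def JS {n : ℕ} (Q : Matrix (Fin n) (Fin n) ℝ) (x z : Fin n → ℝ) : Prop :=
  ∀ i, z i = nPart (x i - ∑ j ∈ Finset.univ.erase i, Q i j * z j)

/-- The cone `C = {u : u ≥ 0 and uᵀ(I − Q) ≤ 0 componentwise}`. -/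
def coneC {n : ℕ} (Q : Matrix (Fin n) (Fin n) ℝ) : Set (Fin n → ℝ) :=
  {u | (∀ i, 0 ≤ u i) ∧ ∀ j, Matrix.vecMul u (1 - Q) j ≤ 0}

/-- The dual cone `C* = {y : uᵀ y ≥ 0 for all u ∈ C}`. -/
def dualConeC {n : ℕ} (Q : Matrix (Fin n) (Fin n) ℝ) : Set (Fin n → ℝ) :=
  {y | ∀ u ∈ coneC Q, 0 ≤ ∑ i, u i * y i}

/-- The feasible set `F(x) = {z : z ≥ 0 and (I − Q) z ≥ −x componentwise}`. -/
def feas {n : ℕ} (Q : Matrix (Fin n) (Fin n) ℝ) (x : Fin n → ℝ) : Set (Fin n → ℝ) :=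
  {z | (∀ i, 0 ≤ z i) ∧ ∀ i, -(x i) ≤ Matrix.mulVec (1 - Q) z i}

section FixedPoint

variable {α : Type*} [ConditionallyCompleteLattice α]

theorem Monotone.exists_isFixedPt_mem_Icc {f : α → α} (hf : Monotone f) {a b : α}
    (hab : a ≤ b) (ha : a ≤ f a) (hb : f b ≤ b) : ∃ c ∈ Set.Icc a b, Function.IsFixedPt f c := by
  have : Fact (a ≤ b) := ⟨hab⟩
  have maps : ∀ c ∈ Set.Icc a b, f c ∈ Set.Icc a b := fun c hc =>
    ⟨ha.trans (hf hc.1), (hf hc.2).trans hb⟩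
  let g : Set.Icc a b →o Set.Icc a b :=
    ⟨fun c => ⟨f c, maps c c.2⟩, fun _ _ h => hf h⟩
  exact ⟨g.lfp, g.lfp.2, congrArg Subtype.val g.isFixedPt_lfp⟩

end FixedPoint

section ConicalHull

variable {ι E : Type*} [Fintype ι] [NormedAddCommGroup E] [NormedSpace ℝ E]

theorem PointedCone.mem_hull_range_iff {v : ι → E} {x : E} :
    x ∈ PointedCone.hull ℝ (Set.range v) ↔ ∃ c : ι → ℝ, 0 ≤ c ∧ ∑ i, c i • v i = x := by
  rw [Submodule.mem_span_range_iff_exists_fun]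
  constructor
  · rintro ⟨c, rfl⟩
    exact ⟨fun i => c i, fun i => (c i).2, rfl⟩
  · rintro ⟨c, hc, rfl⟩
    exact ⟨fun i => ⟨c i, hc i⟩, rfl⟩

theorem exists_nonneg_sub_smul_eq_zero {c g : ι → ℝ} (hc : 0 ≤ c) (hg : ∃ j, 0 < g j) :
    ∃ t : ℝ, 0 ≤ c - t • g ∧ ∃ i, c i - t * g i = 0 := by
  obtain ⟨j, hj⟩ := hg
  obtain ⟨i, hi, hmin⟩ := ({i | 0 < g i} : Finset ι).exists_min_image (fun i => c i / g i)
    ⟨j, by simpa using hj⟩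
  rw [Finset.mem_filter_univ] at hi
  refine ⟨c i / g i, fun k => ?_, i, by field_simp; ring⟩
  rw [Pi.zero_apply, Pi.sub_apply, Pi.smul_apply, smul_eq_mul, sub_nonneg]
  rcases lt_or_ge 0 (g k) with hk | hk
  · exact (le_div_iff₀ hk).mp (hmin k (by simpa using hk))
  · exact (mul_nonpos_of_nonneg_of_nonpos (div_nonneg (hc i) hi.le) hk).trans (hc k)

theorem exists_mem_hull_range_ne_of_not_linearIndependent {v : ι → E}
    (hv : ¬LinearIndependent ℝ v) {x : E} (hx : x ∈ PointedCone.hull ℝ (Set.range v)) :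
    ∃ i, x ∈ PointedCone.hull ℝ (Set.range fun j : {j // j ≠ i} => v j.1) := by
  classical
  obtain ⟨c, hc, rfl⟩ := PointedCone.mem_hull_range_iff.mp hx
  obtain ⟨g, hg, j, hj⟩ := Fintype.not_linearIndependent_iff.mp hv
  obtain ⟨g, hg, hpos⟩ : ∃ g : ι → ℝ, ∑ i, g i • v i = 0 ∧ ∃ j, 0 < g j := by
    rcases hj.lt_or_gt with hj | hj
    · exact ⟨-g, by simpa using hg, j, by simpa using hj⟩
    · exact ⟨g, hg, j, hj⟩
  obtain ⟨t, hnonneg, i, hi⟩ := exists_nonneg_sub_smul_eq_zero hc hpos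
  refine ⟨i, PointedCone.mem_hull_range_iff.mpr ⟨fun j => (c - t • g) j, fun j => hnonneg j, ?_⟩⟩
  have hsum : ∑ j, (c - t • g) j • v j = ∑ j, c j • v j := by
    simp only [Pi.sub_apply, Pi.smul_apply, smul_eq_mul, sub_smul, Finset.sum_sub_distrib,
      mul_smul, ← Finset.smul_sum, hg, smul_zero, sub_zero]
  rw [← hsum, Fintype.sum_eq_add_sum_subtype_ne _ i]
  simp [hi]

theorem PointedCone.isClosed_hull_range (v : ι → E) :
    IsClosed (PointedCone.hull ℝ (Set.range v) : Set E) := by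
  classical
  induction h : Fintype.card ι using Nat.strong_induction_on generalizing ι with
  | _ N ih =>
  by_cases hv : LinearIndependent ℝ v
  · have hhull : (PointedCone.hull ℝ (Set.range v) : Set E) =
        Fintype.linearCombination ℝ v '' Set.Ici 0 := by
      ext x
      simp [PointedCone.mem_hull_range_iff, Fintype.linearCombination_apply]
    rw [hhull]
    refine (LinearMap.isClosedEmbedding_of_injective ?_).isClosedMap _ isClosed_Ici
    exact LinearMap.ker_eq_bot.mpr (linearIndependent_iff_injective_fintypeLinearCombination.mp hv)
  · have hhull : (PointedCone.hull ℝ (Set.range v) : Set E) =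
        ⋃ i, (PointedCone.hull ℝ (Set.range fun j : {j // j ≠ i} => v j.1) : Set E) := by
      refine subset_antisymm (fun x hx => Set.mem_iUnion.mpr
        (exists_mem_hull_range_ne_of_not_linearIndependent hv hx)) (Set.iUnion_subset fun i => ?_)
      exact Submodule.span_mono (Set.range_comp_subset_range _ v)
    rw [hhull]
    refine isClosed_iUnion_of_finite fun i => ih _ ?_ _ rfl
    exact h ▸ Fintype.card_subtype_lt (p := (· ≠ i)) (not_not.mpr rfl)

theorem exists_strongDual_of_notMem_hull_range {v : ι → E} {x : E}
    (hx : x ∉ PointedCone.hull ℝ (Set.range v)) :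
    ∃ f : StrongDual ℝ E, (∀ i, 0 ≤ f (v i)) ∧ f x < 0 := by
  let C : ProperCone ℝ E := ⟨PointedCone.hull ℝ (Set.range v), PointedCone.isClosed_hull_range v⟩
  obtain ⟨f, hC, hfx⟩ := C.hyperplane_separation_point hx
  exact ⟨f, fun i => hC _ (PointedCone.subset_hull (Set.mem_range_self i)), hfx⟩

end ConicalHull

theorem Matrix.exists_nonneg_mulVec_add_nonneg_iff {m k : Type*} [Fintype m] [Fintype k]
    (A : Matrix m k ℝ) (x : m → ℝ) :
    (∃ z, 0 ≤ z ∧ 0 ≤ A *ᵥ z + x) ↔ ∀ u, 0 ≤ u → u ᵥ* A ≤ 0 → 0 ≤ u ⬝ᵥ x := by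
  classical
  constructor
  · rintro ⟨z, hz, hAzx⟩ u hu huA
    have hAz : (u ᵥ* A) ⬝ᵥ z ≤ 0 := by
      simpa using dotProduct_le_dotProduct_of_nonneg_right huA hz
    have := dotProduct_nonneg_of_nonneg hu hAzx
    rw [dotProduct_add, dotProduct_mulVec] at this
    linarith
  · intro hdual
    by_contra hno
    -- `A *ᵥ z + x ≥ 0` says that `x` is a conical combination of the unit vectors and of
    -- the negated columns of `A`.
    let v : m ⊕ k → m → ℝ := Sum.elim (fun i => Pi.single i 1) (fun j => -Aᵀ j)
    have hx : x ∉ PointedCone.hull ℝ (Set.range v) := by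
      rw [PointedCone.mem_hull_range_iff]
      rintro ⟨c, hc, hcx⟩
      refine hno ⟨c ∘ Sum.inr, fun j => hc _, fun i => ?_⟩
      have hci : 0 ≤ c (Sum.inl i) := hc _
      have hi := congrFun hcx i
      simp only [Finset.sum_apply, Pi.smul_apply, smul_eq_mul, Fintype.sum_sum_type, Sum.elim_inl,
        Pi.single_apply, mul_comm, ite_mul, one_mul, zero_mul, sum_ite_eq, mem_univ, ↓reduceIte,
        Sum.elim_inr, Pi.neg_apply, transpose_apply, neg_mul, sum_neg_distrib, v] at hi
      simp only [Pi.add_apply, mulVec, dotProduct, Function.comp_apply, Pi.zero_apply]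
      linarith
    obtain ⟨f, hfv, hfx⟩ := exists_strongDual_of_notMem_hull_range hx
    let u : m → ℝ := fun i => f (Pi.single i 1)
    have hf : ∀ y, f y = u ⬝ᵥ y := fun y => by
      conv_lhs => rw [← Finset.univ_sum_single y]
      simp only [map_sum, u, dotProduct, mul_comm]
      refine Finset.sum_congr rfl fun i _ => ?_
      rw [← smul_eq_mul, ← map_smul, ← Pi.single_smul, smul_eq_mul, mul_one]
    have hu : 0 ≤ u := fun i => hfv (Sum.inl i)
    have huA : u ᵥ* A ≤ 0 := fun j => by
      have : 0 ≤ u ⬝ᵥ -Aᵀ j := hf _ ▸ hfv (Sum.inr j)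
      rw [dotProduct_neg] at this
      exact neg_nonneg.mp this
    exact hfx.not_ge (hf x ▸ hdual u hu huA)

section JumpSystem

variable {n : ℕ} {Q : Matrix (Fin n) (Fin n) ℝ} {x : Fin n → ℝ}

noncomputable def jumpMap (Q : Matrix (Fin n) (Fin n) ℝ) (x z : Fin n → ℝ) : Fin n → ℝ :=
  fun i => max 0 ((Q *ᵥ z) i - x i)

theorem jumpMap_nonneg (z : Fin n → ℝ) : 0 ≤ jumpMap Q x z :=
  fun _ => le_max_left _ _

theorem jumpMap_monotone (hQ : ∀ i j, 0 ≤ Q i j) : Monotone (jumpMap Q x) := fun z w hzw i => by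
  have hQzw : (Q *ᵥ z) i ≤ (Q *ᵥ w) i := dotProduct_le_dotProduct_of_nonneg_left hzw (hQ i)
  exact max_le_max le_rfl (sub_le_sub_right hQzw _)

theorem JS_iff_isFixedPt (hQ : ∀ i, Q i i = 0) {z : Fin n → ℝ} :
    JS Q x z ↔ Function.IsFixedPt (jumpMap Q x) z := by
  have hdiag : ∀ i, ∑ j ∈ univ.erase i, Q i j * z j = (Q *ᵥ z) i := fun i =>
    Finset.sum_erase _ (by rw [hQ, zero_mul])
  simp only [JS, nPart, Function.IsFixedPt, funext_iff, jumpMap, hdiag, neg_sub, eq_comm]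

theorem mem_feas_iff {z : Fin n → ℝ} : z ∈ feas Q x ↔ 0 ≤ z ∧ jumpMap Q x z ≤ z := by
  simp only [feas, Set.mem_ofPred_eq, sub_mulVec, one_mulVec, Pi.sub_apply, Pi.le_def, jumpMap,
    Pi.zero_apply, max_le_iff]
  exact ⟨fun ⟨h0, h⟩ => ⟨h0, fun i => ⟨h0 i, by linarith [h i]⟩⟩,
    fun ⟨h0, h⟩ => ⟨h0, fun i => by linarith [(h i).2]⟩⟩

theorem feas_nonempty_iff : (feas Q x).Nonempty ↔ x ∈ dualConeC Q := by
  have := Matrix.exists_nonneg_mulVec_add_nonneg_iff (1 - Q) x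
  simp only [Pi.le_def, Pi.zero_apply, Pi.add_apply] at this
  simp only [Set.Nonempty, feas, dualConeC, coneC, Set.mem_ofPred_eq, neg_le_iff_add_nonneg, and_imp]
  exact this

end JumpSystem

theorem js_solvable_iff_mem_dualCone_general {n : ℕ}
    (Q : Matrix (Fin n) (Fin n) ℝ)
    (hQnonneg : ∀ i j, 0 ≤ Q i j) (hQdiag : ∀ i, Q i i = 0)
    (x : Fin n → ℝ) :
    (∃ z : Fin n → ℝ, (∀ i, 0 ≤ z i) ∧ JS Q x z) ↔ x ∈ dualConeC Q := by
  rw [← feas_nonempty_iff]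
  constructor
  · rintro ⟨z, hz, hJS⟩
    exact ⟨z, mem_feas_iff.mpr ⟨hz, ((JS_iff_isFixedPt hQdiag).mp hJS).le⟩⟩
  · rintro ⟨w, hw⟩
    obtain ⟨hw0, hTw⟩ := mem_feas_iff.mp hw
    obtain ⟨z, hz, hfix⟩ :=
      (jumpMap_monotone hQnonneg).exists_isFixedPt_mem_Icc hw0 (jumpMap_nonneg 0) hTw
    exact ⟨z, hz.1, (JS_iff_isFixedPt hQdiag).mpr hfix⟩

/-- Theorem 2.1 (existence part): JS(x) has a nonnegative solution iff `x ∈ C*`. -/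
theorem js_solvable_iff_mem_dualCone {n : ℕ} (hn : 1 ≤ n)
    (Q : Matrix (Fin n) (Fin n) ℝ)
    (hQnonneg : ∀ i j, 0 ≤ Q i j) (hQdiag : ∀ i, Q i i = 0)
    (x : Fin n → ℝ) :
    (∃ z : Fin n → ℝ, (∀ i, 0 ≤ z i) ∧ JS Q x z) ↔ x ∈ dualConeC Q :=
  js_solvable_iff_mem_dualCone_general Q hQnonneg hQdiag x
end

section
/- Let n ≥ 1, let Q be an n×n real matrix with nonnegative entries and zero diagonal, and let x ∈ ℝⁿ. If z* ∈ F(x) minimizes the ℓ¹ objective Σ_{i=1}^n z_i over F(x) (i.e., Σ_i z*_i ≤ Σ_i z_i for all z ∈ F(x)), then z* solves the jump system JS(x): for every 1 ≤ i ≤ n, z*_i = ( x_i − Σ_{j≠i} q_{ij} z*_j )_{-}; equivalently, for each i, either z*_i = 0 or z*_i = −( x_i − Σ_{j≠i} q_{ij} z*_j ). -/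
open Matrix Finset Filter

/-! Lowering a coordinate `zᵢ` of a feasible point only relaxes the other constraints, because
`Q ≥ 0` enters them with a minus sign, while the `i`-th constraint does not involve `zᵢ` since
`qᵢᵢ = 0`. Hence a feasible point can be lowered coordinatewise down to `(xᵢ − ∑_{j≠i} qᵢⱼ zⱼ)₋`,
and at an ℓ¹-minimizer no coordinate can exceed that bound. -/

theorem nPart_antitone : Antitone nPart := fun _ _ hab => max_le_max le_rfl (neg_le_neg hab)

theorem mulVec_one_sub_apply_of_diag_eq_zero {ι : Type*} [Fintype ι] [DecidableEq ι]
    {Q : Matrix ι ι ℝ} (hQdiag : ∀ i, Q i i = 0) (z : ι → ℝ) (i : ι) :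
    ((1 - Q) *ᵥ z) i = z i - ∑ j ∈ univ.erase i, Q i j * z j := by
  rw [sub_mulVec, one_mulVec, Pi.sub_apply, mulVec, dotProduct,
    ← add_sum_erase _ _ (mem_univ i), hQdiag, zero_mul, zero_add]

theorem sum_erase_mul_le_sum_erase_mul {ι : Type*} [Fintype ι] [DecidableEq ι]
    {Q : Matrix ι ι ℝ} (hQnonneg : ∀ i j, 0 ≤ Q i j) {z w : ι → ℝ} (hzw : z ≤ w) (i : ι) :
    ∑ j ∈ univ.erase i, Q i j * z j ≤ ∑ j ∈ univ.erase i, Q i j * w j :=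
  sum_le_sum fun j _ => mul_le_mul_of_nonneg_left (hzw j) (hQnonneg i j)

section Feasibility

variable {n : ℕ} {Q : Matrix (Fin n) (Fin n) ℝ} {x z : Fin n → ℝ}

theorem mem_feas_iff_s3 (hQdiag : ∀ i, Q i i = 0) :
    z ∈ feas Q x ↔ ∀ i, nPart (x i - ∑ j ∈ univ.erase i, Q i j * z j) ≤ z i := by
  simp only [feas, Set.mem_ofPred_eq, mulVec_one_sub_apply_of_diag_eq_zero hQdiag, nPart,
    max_le_iff, ← forall_and]
  refine forall_congr' fun i => and_congr_right' ?_
  constructor <;> intro h <;> linarith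

theorem update_mem_feas (hQnonneg : ∀ i j, 0 ≤ Q i j) (hQdiag : ∀ i, Q i i = 0)
    (hz : z ∈ feas Q x) (i : Fin n) {m : ℝ}
    (hm : nPart (x i - ∑ j ∈ univ.erase i, Q i j * z j) ≤ m) (hmz : m ≤ z i) :
    Function.update z i m ∈ feas Q x := by
  have hle : Function.update z i m ≤ z := update_le_self_iff.2 hmz
  rw [mem_feas_iff_s3 hQdiag] at hz ⊢
  intro k
  rcases eq_or_ne k i with rfl | hki
  · have hsum : ∑ j ∈ univ.erase k, Q k j * Function.update z k m j
        = ∑ j ∈ univ.erase k, Q k j * z j :=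
      sum_congr rfl fun j hj => by rw [Function.update_of_ne (ne_of_mem_erase hj)]
    rwa [hsum, Function.update_self]
  · rw [Function.update_of_ne hki]
    exact (nPart_antitone (sub_le_sub_left
      (sum_erase_mul_le_sum_erase_mul hQnonneg hle k) _)).trans (hz k)

theorem JS_of_forall_sum_le (hQnonneg : ∀ i j, 0 ≤ Q i j) (hQdiag : ∀ i, Q i i = 0)
    (hmem : z ∈ feas Q x) (hmin : ∀ w ∈ feas Q x, ∑ i, z i ≤ ∑ i, w i) : JS Q x z := by
  intro i
  have hle := (mem_feas_iff_s3 hQdiag).1 hmem i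
  refine (hle.lt_or_eq.resolve_left fun hlt => ?_).symm
  have hsum : ∑ j, Function.update z i _ j < ∑ j, z j :=
    sum_lt_sum (fun j _ => update_le_self_iff.2 hlt.le j)
      ⟨i, mem_univ i, by rwa [Function.update_self]⟩
  exact (hmin _ (update_mem_feas hQnonneg hQdiag hmem i le_rfl hlt.le)).not_gt hsum

theorem JS.eq_zero_or_eq_neg (h : JS Q x z) (i : Fin n) :
    z i = 0 ∨ z i = -(x i - ∑ j ∈ univ.erase i, Q i j * z j) := by
  rw [h i]
  exact max_choice _ _

end Feasibility

theorem l1_minimizer_solves_js_general {n : ℕ}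
    (Q : Matrix (Fin n) (Fin n) ℝ)
    (hQnonneg : ∀ i j, 0 ≤ Q i j) (hQdiag : ∀ i, Q i i = 0)
    (x : Fin n → ℝ) (zstar : Fin n → ℝ)
    (hmem : zstar ∈ feas Q x)
    (hmin : ∀ z ∈ feas Q x, ∑ i, zstar i ≤ ∑ i, z i) :
    JS Q x zstar ∧
      ∀ i, zstar i = 0 ∨
        zstar i = -(x i - ∑ j ∈ Finset.univ.erase i, Q i j * zstar j) := by
  have hJS := JS_of_forall_sum_le hQnonneg hQdiag hmem hmin
  exact ⟨hJS, hJS.eq_zero_or_eq_neg⟩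

/-- Complementary slackness: an ℓ¹-minimizer over `F(x)` solves the jump system JS(x);
equivalently, for each `i`, either `z*_i = 0` or `z*_i = −(x_i − ∑_{j≠i} q_{ij} z*_j)`. -/
theorem l1_minimizer_solves_js {n : ℕ} (hn : 1 ≤ n)
    (Q : Matrix (Fin n) (Fin n) ℝ)
    (hQnonneg : ∀ i j, 0 ≤ Q i j) (hQdiag : ∀ i, Q i i = 0)
    (x : Fin n → ℝ) (zstar : Fin n → ℝ)
    (hmem : zstar ∈ feas Q x)
    (hmin : ∀ z ∈ feas Q x, ∑ i, zstar i ≤ ∑ i, z i) :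
    JS Q x zstar ∧
      ∀ i, zstar i = 0 ∨
        zstar i = -(x i - ∑ j ∈ Finset.univ.erase i, Q i j * zstar j) :=
  l1_minimizer_solves_js_general Q hQnonneg hQdiag x zstar hmem hmin
end

section
/- Let n ≥ 1, let Q be an n×n real matrix with nonnegative entries and zero diagonal, let x ∈ ℝⁿ, and suppose the feasible set F(x) is nonempty. Then for every vector a ∈ ℝⁿ with strictly positive entries, the linear functional z ↦ aᵀz attains its minimum over F(x), and the minimizer is unique. -/
open Matrix Finset Filter

/-!
The objective `z ↦ aᵀz` is strictly monotone for the componentwise order since `a > 0`, and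
`F(x)` is closed under componentwise minima because `Q ≥ 0`: lowering some coordinates of a
feasible `z` only lowers `Qz`. So the minimum of two minimizers is feasible and no larger than
either, which forces both to equal it. Existence holds because `F(x)` is closed and lies in the
nonnegative orthant, where the sublevel sets of `z ↦ aᵀz` are bounded.
-/

theorem one_sub_mulVec_apply {ι R : Type*} [Fintype ι] [DecidableEq ι] [Ring R]
    (M : Matrix ι ι R) (z : ι → R) (i : ι) : ((1 - M) *ᵥ z) i = z i - M i ⬝ᵥ z := by
  rw [sub_mulVec, one_mulVec]
  rfl

theorem strictMono_dotProduct_of_pos {ι R : Type*} [Fintype ι] [Semiring R] [PartialOrder R]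
    [IsStrictOrderedRing R] {a : ι → R} (ha : ∀ i, 0 < a i) : StrictMono (a ⬝ᵥ ·) := by
  intro u v huv
  obtain ⟨hle, i, hlt⟩ := Pi.lt_def.mp huv
  exact Finset.sum_lt_sum (fun j _ => mul_le_mul_of_nonneg_left (hle j) (ha j).le)
    ⟨i, Finset.mem_univ i, mul_lt_mul_of_pos_left hlt (ha i)⟩

theorem InfClosed.eq_of_isMinOn {α β : Type*} [SemilatticeInf α] [Preorder β] {f : α → β}
    (hf : StrictMono f) {s : Set α} (hs : InfClosed s) {y z : α} (hy : y ∈ s) (hz : z ∈ s)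
    (hmy : IsMinOn f s y) (hmz : IsMinOn f s z) : y = z := by
  have inf_eq_left : ∀ {u v}, u ∈ s → v ∈ s → IsMinOn f s u → u ⊓ v = u := by
    intro u v hu hv hmu
    by_contra hne
    exact (hf (lt_of_le_of_ne inf_le_left hne)).not_ge (hmu (hs hu hv))
  calc y = y ⊓ z := (inf_eq_left hy hz hmy).symm
    _ = z ⊓ y := inf_comm y z
    _ = z := inf_eq_left hz hy hmz

-- The sublevel set of `a ⬝ᵥ ·` through a point of `s` lies in a box, hence is compact.
theorem exists_isMinOn_dotProduct_of_isClosed {ι : Type*} [Fintype ι] {s : Set (ι → ℝ)}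
    (hs : IsClosed s) (hne : s.Nonempty) (hs_nonneg : ∀ z ∈ s, 0 ≤ z) {a : ι → ℝ}
    (ha : ∀ i, 0 < a i) : ∃ z ∈ s, IsMinOn (a ⬝ᵥ ·) s z := by
  obtain ⟨z₀, hz₀⟩ := hne
  have hcont : Continuous (a ⬝ᵥ ·) := continuous_const.dotProduct continuous_id
  set K := s ∩ {z | a ⬝ᵥ z ≤ a ⬝ᵥ z₀}
  have hK_box : K ⊆ Set.Icc 0 (fun i => a ⬝ᵥ z₀ / a i) := by
    rintro z ⟨hz, hz_le⟩
    refine ⟨hs_nonneg z hz, fun i => (le_div_iff₀' (ha i)).mpr ?_⟩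
    calc a i * z i ≤ a ⬝ᵥ z :=
          Finset.single_le_sum (fun j _ => mul_nonneg (ha j).le (hs_nonneg z hz j))
            (Finset.mem_univ i)
      _ ≤ a ⬝ᵥ z₀ := hz_le
  have hK : IsCompact K :=
    isCompact_Icc.of_isClosed_subset (hs.inter (isClosed_le hcont continuous_const)) hK_box
  obtain ⟨z, ⟨hz, -⟩, hmin⟩ :=
    hK.exists_isMinOn ⟨z₀, hz₀, le_refl (a ⬝ᵥ z₀)⟩ hcont.continuousOn
  refine ⟨z, hz, isMinOn_iff.mpr fun y hy => ?_⟩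
  rcases le_total (a ⬝ᵥ y) (a ⬝ᵥ z₀) with hy_le | hy_ge
  · exact hmin ⟨hy, hy_le⟩
  · exact (hmin ⟨hz₀, le_refl (a ⬝ᵥ z₀)⟩).trans hy_ge

section feas

variable {n : ℕ} (Q : Matrix (Fin n) (Fin n) ℝ) (x : Fin n → ℝ)

theorem isClosed_feas : IsClosed (feas Q x) :=
  show IsClosed {z | 0 ≤ z ∧ -x ≤ (1 - Q) *ᵥ z} from
    (isClosed_le continuous_const continuous_id).inter
      (isClosed_le continuous_const (continuous_const.matrix_mulVec continuous_id))

theorem infClosed_feas (hQ : ∀ i j, 0 ≤ Q i j) : InfClosed (feas Q x) := by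
  intro y hy z hz
  refine ⟨fun i => le_min (hy.1 i) (hz.1 i), fun i => ?_⟩
  have inherit : ∀ v ∈ feas Q x, y ⊓ z ≤ v → (y ⊓ z) i = v i →
      -x i ≤ ((1 - Q) *ᵥ (y ⊓ z)) i := by
    intro v hv hle heq
    have hv_i := hv.2 i
    rw [one_sub_mulVec_apply] at hv_i ⊢
    linarith [dotProduct_le_dotProduct_of_nonneg_left hle (fun j => hQ i j)]
  rcases le_total (y i) (z i) with h | h
  · exact inherit y hy inf_le_left (min_eq_left h)
  · exact inherit z hz inf_le_right (min_eq_right h)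

end feas

theorem lp_unique_minimizer_general {n : ℕ}
    (Q : Matrix (Fin n) (Fin n) ℝ)
    (hQnonneg : ∀ i j, 0 ≤ Q i j)
    (x : Fin n → ℝ) (hne : (feas Q x).Nonempty)
    (a : Fin n → ℝ) (ha : ∀ i, 0 < a i) :
    ∃! zstar : Fin n → ℝ, zstar ∈ feas Q x ∧
      ∀ z ∈ feas Q x, ∑ i, a i * zstar i ≤ ∑ i, a i * z i := by
  obtain ⟨zstar, hzstar, hmin⟩ :=
    exists_isMinOn_dotProduct_of_isClosed (isClosed_feas Q x) hne (fun _ hz => hz.1) ha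
  refine ⟨zstar, ⟨hzstar, isMinOn_iff.mp hmin⟩, fun y ⟨hy, hymin⟩ => ?_⟩
  exact (infClosed_feas Q x hQnonneg).eq_of_isMinOn (strictMono_dotProduct_of_pos ha) hy hzstar
    (isMinOn_iff.mpr hymin) hmin

/-- If `F(x)` is nonempty then for every strictly positive `a` the linear functional
`z ↦ aᵀz` attains its minimum over `F(x)` at a unique point. -/
theorem lp_unique_minimizer {n : ℕ} (hn : 1 ≤ n)
    (Q : Matrix (Fin n) (Fin n) ℝ)
    (hQnonneg : ∀ i j, 0 ≤ Q i j) (hQdiag : ∀ i, Q i i = 0)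
    (x : Fin n → ℝ) (hne : (feas Q x).Nonempty)
    (a : Fin n → ℝ) (ha : ∀ i, 0 < a i) :
    ∃! zstar : Fin n → ℝ, zstar ∈ feas Q x ∧
      ∀ z ∈ feas Q x, ∑ i, a i * zstar i ≤ ∑ i, a i * z i :=
  lp_unique_minimizer_general Q hQnonneg x hne a ha
end

section
/- Let n ≥ 1, let Q be an n×n real matrix with nonnegative entries and zero diagonal, and let x ∈ ℝⁿ. The feasible set F(x) = { z ∈ ℝⁿ : z ≥ 0 componentwise and (I−Q)z ≥ −x componentwise } is closed under componentwise minimum: if z and z' both belong to F(x), then the vector w with w_i = min(z_i, z'_i) also belongs to F(x). -/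
open Matrix Finset Filter

/-! Since `I − Q` has nonpositive off-diagonal entries, lowering the coordinates `j ≠ i` of a
vector can only raise the `i`-th coordinate of its image under `I − Q`. Where `min (z i) (z' i)`
is attained at `z i`, the vector `z ⊓ z'` is such a lowering of `z`, so it inherits the `i`-th
inequality from `z`. -/

section ZMatrix

variable {ι R : Type*} [CommRing R] [LinearOrder R] [IsStrictOrderedRing R]

lemma one_sub_apply_nonpos_of_ne [DecidableEq ι] {Q : Matrix ι ι R} {i j : ι}
    (hQ : 0 ≤ Q i j) (hij : i ≠ j) : (1 - Q) i j ≤ 0 := by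
  simpa [Matrix.one_apply_ne hij] using hQ

variable [Fintype ι]

lemma mulVec_apply_le_of_le_of_eq {A : Matrix ι ι R} (hA : ∀ i j, i ≠ j → A i j ≤ 0)
    {v w : ι → R} {i : ι} (hvw : v ≤ w) (hi : v i = w i) :
    (A *ᵥ w) i ≤ (A *ᵥ v) i := by
  refine Finset.sum_le_sum fun j _ => ?_
  rcases eq_or_ne i j with rfl | hij
  · rw [hi]
  · exact mul_le_mul_of_nonpos_left (hvw j) (hA i j hij)

lemma min_le_mulVec_inf_apply {A : Matrix ι ι R} (hA : ∀ i j, i ≠ j → A i j ≤ 0)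
    (v w : ι → R) (i : ι) :
    min ((A *ᵥ v) i) ((A *ᵥ w) i) ≤ (A *ᵥ (v ⊓ w)) i := by
  rcases min_cases (v i) (w i) with ⟨hmin, -⟩ | ⟨hmin, -⟩
  · exact (min_le_left _ _).trans (mulVec_apply_le_of_le_of_eq hA inf_le_left hmin)
  · exact (min_le_right _ _).trans (mulVec_apply_le_of_le_of_eq hA inf_le_right hmin)

end ZMatrix

theorem feas_closed_under_min_general {n : ℕ}
    (Q : Matrix (Fin n) (Fin n) ℝ)
    (hQnonneg : ∀ i j, 0 ≤ Q i j)
    (x : Fin n → ℝ) (z z' : Fin n → ℝ)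
    (hz : z ∈ feas Q x) (hz' : z' ∈ feas Q x) :
    (fun i => min (z i) (z' i)) ∈ feas Q x := by
  obtain ⟨hz_nonneg, hz_ineq⟩ := hz
  obtain ⟨hz'_nonneg, hz'_ineq⟩ := hz'
  refine ⟨fun i => le_min (hz_nonneg i) (hz'_nonneg i), fun i => ?_⟩
  calc -(x i) ≤ min (((1 - Q) *ᵥ z) i) (((1 - Q) *ᵥ z') i) := le_min (hz_ineq i) (hz'_ineq i)
    _ ≤ ((1 - Q) *ᵥ (z ⊓ z')) i :=
      min_le_mulVec_inf_apply (fun _ _ hij => one_sub_apply_nonpos_of_ne (hQnonneg _ _) hij) z z' i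

/-- The feasible set `F(x)` is closed under componentwise minimum. -/
theorem feas_closed_under_min {n : ℕ} (hn : 1 ≤ n)
    (Q : Matrix (Fin n) (Fin n) ℝ)
    (hQnonneg : ∀ i j, 0 ≤ Q i j) (hQdiag : ∀ i, Q i i = 0)
    (x : Fin n → ℝ) (z z' : Fin n → ℝ)
    (hz : z ∈ feas Q x) (hz' : z' ∈ feas Q x) :
    (fun i => min (z i) (z' i)) ∈ feas Q x :=
  feas_closed_under_min_general Q hQnonneg x z z' hz hz'
end

section
/- Let Y : [0, ∞) → ℝ be a function, let t > 0, and suppose: (i) the set { (Y(s))_{-} : s ∈ [0, t] } is bounded above, and (ii) Y has a left limit Y⁻ at t, i.e., Y(s) → Y⁻ as s → t with s < t. Define L(s) = sup_{r ∈ [0, s]} (Y(r))_{-} for s ∈ [0, t], define the left limit L⁻ = sup_{s ∈ [0, t)} L(s), and set X⁻ = Y⁻ + L⁻. Then L(t) − L⁻ = ( X⁻ + (Y(t) − Y⁻) )_{-}. -/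
/-! Since `[0, t] = [0, t) ∪ {t}` and the running suprema over `[0, s]`, `s < t`, exhaust
`[0, t)`, both `L⁻` and `L t` are suprema of `(Y r)₋`: `L t = max (Y t)₋ L⁻`. The claim is then
the identity `max a₋ S - S = (S + a)₋` for `S ≥ 0`. -/

open Filter Set

lemma nPart_nonneg (a : ℝ) : 0 ≤ nPart a := le_max_left _ _

lemma max_nPart_sub_eq_nPart_add (a : ℝ) {S : ℝ} (hS : 0 ≤ S) :
    max (nPart a) S - S = nPart (S + a) := by
  unfold nPart
  rcases le_total (-a) S with h | h
  · rw [max_eq_right (max_le hS h), max_eq_left (by linarith)]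
    ring
  · rw [max_eq_left (h.trans (le_max_right 0 (-a))), max_eq_right (hS.trans h),
      max_eq_right (by linarith : (0 : ℝ) ≤ -(S + a))]
    ring

section RunningSup

variable {f : ℝ → ℝ} {t : ℝ}

lemma csSup_image_Icc_eq_max (ht : 0 < t) (hbdd : BddAbove (f '' Ico 0 t)) :
    sSup (f '' Icc 0 t) = max (f t) (sSup (f '' Ico 0 t)) := by
  rw [← Ico_insert_right ht.le, image_insert_eq,
    csSup_insert hbdd ((nonempty_Ico.2 ht).image f)]

lemma csSup_image_runningSup_Ico (ht : 0 < t) (hbdd : BddAbove (f '' Ico 0 t)) :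
    sSup ((fun s => sSup (f '' Icc 0 s)) '' Ico 0 t) = sSup (f '' Ico 0 t) := by
  have hrun_le : ∀ s ∈ Ico 0 t, sSup (f '' Icc 0 s) ≤ sSup (f '' Ico 0 t) := fun s hs =>
    csSup_le_csSup hbdd ((nonempty_Icc.2 hs.1).image f) (image_mono (Icc_subset_Ico_right hs.2))
  have hrun_bdd : BddAbove ((fun s => sSup (f '' Icc 0 s)) '' Ico 0 t) :=
    ⟨_, forall_mem_image.2 hrun_le⟩
  apply le_antisymm (csSup_le ((nonempty_Ico.2 ht).image _) (forall_mem_image.2 hrun_le))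
  refine csSup_le ((nonempty_Ico.2 ht).image f) (forall_mem_image.2 fun r hr => ?_)
  have hfr : f r ≤ sSup (f '' Icc 0 r) :=
    le_csSup (hbdd.mono (image_mono (Icc_subset_Ico_right hr.2))) ⟨r, right_mem_Icc.2 hr.1, rfl⟩
  exact hfr.trans (le_csSup hrun_bdd ⟨r, hr, rfl⟩)

end RunningSup

theorem skorokhod_jump_general (Y : ℝ → ℝ) (t : ℝ) (ht : 0 < t)
    (hbdd : BddAbove ((fun s => nPart (Y s)) '' Set.Icc 0 t))
    (Yminus : ℝ)
    (L : ℝ → ℝ)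
    (hL : ∀ s ∈ Set.Icc (0 : ℝ) t, L s = sSup ((fun r => nPart (Y r)) '' Set.Icc 0 s))
    (Lminus : ℝ) (hLminus : Lminus = sSup (L '' Set.Ico 0 t))
    (Xminus : ℝ) (hXminus : Xminus = Yminus + Lminus) :
    L t - Lminus = nPart (Xminus + (Y t - Yminus)) := by
  set f : ℝ → ℝ := fun r => nPart (Y r)
  set S := sSup (f '' Ico 0 t)
  have hbdd' : BddAbove (f '' Ico 0 t) := hbdd.mono (image_mono Ico_subset_Icc_self)
  have hLminus' : Lminus = S := by
    rw [hLminus, image_congr fun s hs => hL s (Ico_subset_Icc_self hs),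
      csSup_image_runningSup_Ico ht hbdd']
  have hLt : L t = max (f t) S := by
    rw [hL t (right_mem_Icc.2 ht.le), csSup_image_Icc_eq_max ht hbdd']
  have hS : 0 ≤ S := (nPart_nonneg (Y 0)).trans (le_csSup hbdd' ⟨0, left_mem_Ico.2 ht, rfl⟩)
  rw [hLt, hXminus, hLminus', show Yminus + S + (Y t - Yminus) = S + Y t by ring]
  exact max_nPart_sub_eq_nPart_add (Y t) hS

/-- Lemma 3.1: the jump of the Skorokhod reflection process.  With
`L s = sup_{r ∈ [0,s]} (Y r)₋`, `L⁻ = sup_{s ∈ [0,t)} L s` and `X⁻ = Y⁻ + L⁻`,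
one has `L t − L⁻ = (X⁻ + (Y t − Y⁻))₋`. -/
theorem skorokhod_jump (Y : ℝ → ℝ) (t : ℝ) (ht : 0 < t)
    (hbdd : BddAbove ((fun s => nPart (Y s)) '' Set.Icc 0 t))
    (Yminus : ℝ)
    (hY : Tendsto Y (nhdsWithin t (Set.Iio t)) (nhds Yminus))
    (L : ℝ → ℝ)
    (hL : ∀ s ∈ Set.Icc (0 : ℝ) t, L s = sSup ((fun r => nPart (Y r)) '' Set.Icc 0 s))
    (Lminus : ℝ) (hLminus : Lminus = sSup (L '' Set.Ico 0 t))
    (Xminus : ℝ) (hXminus : Xminus = Yminus + Lminus) :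
    L t - Lminus = nPart (Xminus + (Y t - Yminus)) :=
  skorokhod_jump_general Y t ht hbdd Yminus L hL Lminus hLminus Xminus hXminus
end
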